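/- If T is a polygonal 2-tree with n vertices, e edges, and m chordless cycles, then e = n + m − 1. In particular, the number of polygons of a polygonal 2-tree is independent of the construction sequence used to build it. -/

import Mathlib

open SimpleGraph

/-- The graph obtained from `G` by adding a path of `m` new vertices `w_0, …, w_{m-1}`
together with the edges `{u, w_0}`, `{w_i, w_{i+1}}` for `i + 1 < m`, and `{w_{m-1}, v}`,
thereby creating a new cycle of length `m + 2` through the edge `{u, v}`. -/
def SimpleGraph.pathExtend {V : Type} (G : SimpleGraph V) (u v : V) (m : ℕ) :
    SimpleGraph (V ⊕ Fin m) :=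
  SimpleGraph.fromRel (fun a b =>
    (∃ x y : V, a = Sum.inl x ∧ b = Sum.inl y ∧ G.Adj x y) ∨
    (∃ i : Fin m, a = Sum.inl u ∧ b = Sum.inr i ∧ i.val = 0) ∨
    (∃ i j : Fin m, a = Sum.inr i ∧ b = Sum.inr j ∧ j.val = i.val + 1) ∨
    (∃ i : Fin m, a = Sum.inr i ∧ b = Sum.inl v ∧ i.val = m - 1))

/-- A polygonal 2-tree: any cycle graph on `k ≥ 3` vertices is a polygonal 2-tree, and
any graph obtained from a polygonal 2-tree by adding a path of `m ≥ 1` new vertices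
whose ends are joined to the two endpoints of an existing edge (creating a new cycle
of length `m + 2` through that edge) is again a polygonal 2-tree (up to isomorphism). -/
inductive SimpleGraph.IsPolygonal2Tree : {V : Type} → SimpleGraph V → Prop
  | cycle {V : Type} {G : SimpleGraph V} {k : ℕ} (hk : 3 ≤ k)
      (iso : Nonempty (G ≃g SimpleGraph.cycleGraph k)) : G.IsPolygonal2Tree
  | extend {V : Type} {G : SimpleGraph V} {u v : V} (huv : G.Adj u v)
      {m : ℕ} (hm : 1 ≤ m) {W : Type} {H : SimpleGraph W}
      (iso : Nonempty (H ≃g G.pathExtend u v m)) :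
      G.IsPolygonal2Tree → H.IsPolygonal2Tree

/-- A chordless cycle of `G`, identified with its vertex set `s`: the subgraph of `G`
induced on `s` is a cycle graph on at least three vertices (so in particular no two
non-consecutive vertices of the cycle are adjacent in `G`). -/
def SimpleGraph.IsChordlessCycle {V : Type} (G : SimpleGraph V) (s : Set V) : Prop :=
  3 ≤ Nat.card s ∧ Nonempty (G.induce s ≃g SimpleGraph.cycleGraph (Nat.card s))

/-!
Induction along the construction, all three quantities being isomorphism invariants. A cycle
`C_k` has `k` vertices, `k` edges and a single chordless cycle, because one chordless cycle never
properly contains another. Attaching a path of `p` new vertices to an edge `uv` adds `p` vertices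
and `p + 1` edges (the new polygon `C_{p+2}` shares only the edge `uv` with the old graph), and
exactly one chordless cycle: the new vertices have degree two, so a chordless cycle through one of
them contains the whole path together with `u` and `v`, that is, the new polygon, and hence equals
it.
-/

open Sum

namespace SimpleGraph

section General

variable {V W : Type*} {G : SimpleGraph V} {H : SimpleGraph W}

theorem Preconnected.eq_univ_of_adj_closed (hG : G.Preconnected) {K : Set V}
    (hK : ∀ a b, a ∈ K → G.Adj a b → b ∈ K) (hne : K.Nonempty) : K = Set.univ := by
  obtain ⟨a, ha⟩ := hne
  refine Set.eq_univ_of_forall fun b => ?_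
  obtain ⟨w⟩ := hG a b
  induction w with
  | nil => exact ha
  | cons hadj _ ih => exact ih (hK _ _ ha hadj)

noncomputable def Embedding.induceImage (f : G ↪g H) (s : Set V) :
    G.induce s ≃g H.induce (f '' s) where
  toEquiv := Equiv.Set.image f s f.injective
  map_rel_iff' := f.map_adj_iff

theorem Embedding.map_le (f : G ↪g H) : G.map f ≤ H :=
  (map_le_iff_le_comap f.toEmbedding _ _).2 f.comap_eq.ge

theorem card_edgeSet_map {f : V → W} (hf : f.Injective) (G : SimpleGraph V) :
    Nat.card (G.map f).edgeSet = Nat.card G.edgeSet := by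
  rw [show G.map f = G.map (⟨f, hf⟩ : V ↪ W) from rfl, edgeSet_map,
    Nat.card_image_of_injective (Function.Embedding.sym2Map _).injective]

theorem card_edgeSet_sup_add_card_edgeSet_inf [Finite V] (G₁ G₂ : SimpleGraph V) :
    Nat.card (G₁ ⊔ G₂).edgeSet + Nat.card (G₁ ⊓ G₂).edgeSet =
      Nat.card G₁.edgeSet + Nat.card G₂.edgeSet := by
  simp only [Nat.card_coe_set_eq, edgeSet_sup, edgeSet_inf]
  exact Set.ncard_union_add_ncard_inter _ _

theorem card_edgeSet_cycleGraph {n : ℕ} (hn : 3 ≤ n) :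
    Nat.card (cycleGraph n).edgeSet = n := by
  obtain ⟨m, rfl⟩ : ∃ m, n = m + 3 := ⟨n - 3, by omega⟩
  have := (cycleGraph (m + 3)).sum_degrees_eq_twice_card_edges
  simp only [cycleGraph_degree_three_le, Finset.sum_const, Finset.card_univ,
    Fintype.card_fin, smul_eq_mul] at this
  rw [Nat.card_eq_fintype_card, ← edgeFinset_card]
  omega

theorem cycleGraph_adj_iff_val {n : ℕ} {i j : Fin (n + 2)} :
    (cycleGraph (n + 2)).Adj i j ↔
      i.val + 1 = j.val ∨ j.val + 1 = i.val ∨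
        (i.val = 0 ∧ j.val = n + 1) ∨ (j.val = 0 ∧ i.val = n + 1) := by
  have := i.isLt
  have := j.isLt
  rw [cycleGraph_adj']
  rcases le_or_gt j i with h | h
  · rw [Fin.coe_sub_iff_le.2 h]
    rcases h.eq_or_lt with h' | h'
    · subst h'; simp only [sub_self, Fin.val_zero]; omega
    · rw [Fin.coe_sub_iff_lt.2 h']; omega
  · rw [Fin.coe_sub_iff_lt.2 h, Fin.coe_sub_iff_le.2 h.le]; omega

end General

section ChordlessCycle

variable {V W : Type} {G : SimpleGraph V} {H : SimpleGraph W} {s t : Set V} {x : V} {n : ℕ}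

theorem Embedding.isChordlessCycle_image_iff (f : G ↪g H) :
    H.IsChordlessCycle (f '' s) ↔ G.IsChordlessCycle s := by
  unfold IsChordlessCycle
  rw [Nat.card_image_of_injective f.injective s]
  exact and_congr_right fun _ =>
    ⟨fun ⟨e⟩ => ⟨(f.induceImage s).trans e⟩,
      fun ⟨e⟩ => ⟨(f.induceImage s).symm.trans e⟩⟩

theorem Iso.card_chordlessCycles_eq (e : G ≃g H) :
    Nat.card {s : Set V // G.IsChordlessCycle s} =
      Nat.card {t : Set W // H.IsChordlessCycle t} :=
  Nat.card_congr <| (Equiv.Set.congr e.toEquiv).subtypeEquiv fun _ =>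
    e.toEmbedding.isChordlessCycle_image_iff.symm

theorem IsChordlessCycle.nonempty (hs : G.IsChordlessCycle s) : s.Nonempty :=
  Set.nonempty_of_ncard_ne_zero (by rw [← Nat.card_coe_set_eq]; have := hs.1; omega)

theorem IsChordlessCycle.preconnected (hs : G.IsChordlessCycle s) : (G.induce s).Preconnected :=
  hs.2.some.preconnected_iff.mpr cycleGraph_preconnected

theorem IsChordlessCycle.exists_adj_iff (hs : G.IsChordlessCycle s) (hx : x ∈ s) :
    ∃ y ∈ s, ∃ z ∈ s, y ≠ z ∧ ∀ w ∈ s, G.Adj x w ↔ w = y ∨ w = z := by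
  obtain ⟨h3, ⟨e⟩⟩ := hs
  obtain ⟨m, hm⟩ : ∃ m, Nat.card s = m + 3 := ⟨_, (Nat.sub_add_cancel h3).symm⟩
  rw [hm] at e
  set a := e ⟨x, hx⟩
  have hne : a - 1 ≠ a + 1 := by
    have := cycleGraph_degree_three_le (v := a)
    rw [cycleGraph_degree_two_le] at this
    intro h
    simp [h] at this
  have hN : (cycleGraph (m + 3)).neighborSet a = {a - 1, a + 1} := cycleGraph_neighborSet
  refine ⟨_, (e.symm (a - 1)).2, _, (e.symm (a + 1)).2,
    fun h => hne (e.symm.injective (Subtype.ext h)), fun w hw => ?_⟩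
  have : G.Adj x w ↔ (cycleGraph (m + 3)).Adj a (e ⟨w, hw⟩) :=
    (e.map_adj_iff (v := ⟨x, hx⟩) (w := ⟨w, hw⟩)).symm
  rw [this, ← mem_neighborSet, hN, Set.mem_insert_iff, Set.mem_singleton_iff,
    ← e.eq_symm_apply, ← e.eq_symm_apply, Subtype.ext_iff, Subtype.ext_iff]

theorem IsChordlessCycle.eq_or_eq_of_adj (hs : G.IsChordlessCycle s) (hx : x ∈ s)
    {y z w : V} (hy : y ∈ s) (hz : z ∈ s) (hw : w ∈ s) (hyz : y ≠ z)
    (hxy : G.Adj x y) (hxz : G.Adj x z) (hxw : G.Adj x w) : w = y ∨ w = z := by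
  obtain ⟨y', -, z', -, -, hadj⟩ := hs.exists_adj_iff hx
  rcases (hadj y hy).1 hxy with rfl | rfl <;> rcases (hadj z hz).1 hxz with rfl | rfl <;>
    first
      | exact absurd rfl hyz
      | exact (hadj w hw).1 hxw
      | exact ((hadj w hw).1 hxw).symm

theorem IsChordlessCycle.mem_of_adj (hs : G.IsChordlessCycle s) (hx : x ∈ s) {y z : V}
    (hxyz : ∀ w, G.Adj x w → w = y ∨ w = z) {w : V} (hxw : G.Adj x w) : w ∈ s := by
  obtain ⟨y', hy', z', hz', hne, hadj⟩ := hs.exists_adj_iff hx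
  rcases hxyz _ ((hadj y' hy').2 (Or.inl rfl)) with rfl | rfl <;>
    rcases hxyz _ ((hadj z' hz').2 (Or.inr rfl)) with rfl | rfl <;>
    rcases hxyz w hxw with rfl | rfl <;> first | assumption | exact absurd rfl hne

theorem IsChordlessCycle.eq_of_subset (hs : G.IsChordlessCycle s) (ht : G.IsChordlessCycle t)
    (hst : s ⊆ t) : s = t := by
  refine hst.antisymm fun b hb => ?_
  suffices h : {a : t | a.1 ∈ s} = Set.univ from Set.eq_univ_iff_forall.1 h ⟨b, hb⟩
  refine ht.preconnected.eq_univ_of_adj_closed ?_ ?_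
  · rintro ⟨a, hat⟩ ⟨c, hct⟩ has hac
    obtain ⟨y, hy, z, hz, hyz, hadj⟩ := hs.exists_adj_iff has
    rcases ht.eq_or_eq_of_adj hat (hst hy) (hst hz) hct hyz ((hadj y hy).2 (Or.inl rfl))
      ((hadj z hz).2 (Or.inr rfl)) hac with rfl | rfl
    exacts [hy, hz]
  · obtain ⟨a, ha⟩ := hs.nonempty
    exact ⟨⟨a, hst ha⟩, ha⟩

theorem isChordlessCycle_univ_cycleGraph (hn : 3 ≤ n) :
    (cycleGraph n).IsChordlessCycle Set.univ := by
  have hcard : Nat.card (Set.univ : Set (Fin n)) = n := by simp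
  refine ⟨hcard.symm ▸ hn, ⟨?_⟩⟩
  rw [hcard]
  exact induceUnivIso _

theorem card_chordlessCycles_cycleGraph (hn : 3 ≤ n) :
    Nat.card {s : Set (Fin n) // (cycleGraph n).IsChordlessCycle s} = 1 :=
  Nat.card_eq_one_iff_exists.2 ⟨⟨_, isChordlessCycle_univ_cycleGraph hn⟩, fun ⟨_, hs⟩ =>
    Subtype.ext (hs.eq_of_subset (isChordlessCycle_univ_cycleGraph hn) (Set.subset_univ _))⟩

end ChordlessCycle

section PathExtend

variable {V : Type} {G : SimpleGraph V} {u v : V} {p : ℕ}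

theorem pathExtend_adj_inl_inl {x y : V} :
    (G.pathExtend u v p).Adj (inl x) (inl y) ↔ G.Adj x y := by
  simp only [pathExtend, fromRel_adj]
  constructor
  · rintro ⟨-, h | h⟩ <;> simp_all [adj_comm]
  · intro h
    exact ⟨by simpa using h.ne, Or.inl (Or.inl ⟨x, y, rfl, rfl, h⟩)⟩

theorem pathExtend_adj_inl_inr {x : V} {i : Fin p} :
    (G.pathExtend u v p).Adj (inl x) (inr i) ↔
      (x = u ∧ i.val = 0) ∨ (x = v ∧ i.val = p - 1) := by
  simp only [pathExtend, fromRel_adj]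
  constructor
  · rintro ⟨-, h | h⟩ <;> simp_all
  · rintro (⟨rfl, h0⟩ | ⟨rfl, h1⟩)
    · exact ⟨by simp, Or.inl (Or.inr (Or.inl ⟨i, rfl, rfl, h0⟩))⟩
    · exact ⟨by simp, Or.inr (Or.inr (Or.inr (Or.inr ⟨i, rfl, rfl, h1⟩)))⟩

theorem pathExtend_adj_inr_inl {i : Fin p} {x : V} :
    (G.pathExtend u v p).Adj (inr i) (inl x) ↔
      (x = u ∧ i.val = 0) ∨ (x = v ∧ i.val = p - 1) := by
  rw [adj_comm, pathExtend_adj_inl_inr]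

theorem pathExtend_adj_inr_inr {i j : Fin p} :
    (G.pathExtend u v p).Adj (inr i) (inr j) ↔ (pathGraph p).Adj i j := by
  simp only [pathExtend, fromRel_adj, pathGraph_adj]
  constructor
  · rintro ⟨-, h | h⟩ <;> simp_all
  · rintro (h | h)
    · exact ⟨by simp [Fin.ext_iff]; omega,
        Or.inl (Or.inr (Or.inr (Or.inl ⟨i, j, rfl, rfl, h.symm⟩)))⟩
    · exact ⟨by simp [Fin.ext_iff]; omega,
        Or.inr (Or.inr (Or.inr (Or.inl ⟨j, i, rfl, rfl, h.symm⟩)))⟩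

variable (G u v p) in
def pathExtendInlEmbedding : G ↪g G.pathExtend u v p where
  toEmbedding := .inl
  map_rel_iff' := pathExtend_adj_inl_inl

/-- The new polygon `u, w₀, …, w_{p-1}, v` of `G.pathExtend u v p`, in cyclic order. -/
def pathExtendCycle (u v : V) (p : ℕ) (j : Fin (p + 2)) : V ⊕ Fin p :=
  if h₀ : j.val = 0 then inl u
  else if h : j.val = p + 1 then inl v
  else inr ⟨j.val - 1, by have := j.isLt; omega⟩

theorem pathExtendCycle_injective (huv : u ≠ v) : Function.Injective (pathExtendCycle u v p) := by
  intro i j hij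
  unfold pathExtendCycle at hij
  split_ifs at hij <;>
    simp only [inl.injEq, inr.injEq, Fin.ext_iff, huv, huv.symm] at hij <;>
    omega

theorem pathExtend_adj_pathExtendCycle (huv : G.Adj u v) {i j : Fin (p + 2)} :
    (G.pathExtend u v p).Adj (pathExtendCycle u v p i) (pathExtendCycle u v p j) ↔
      (cycleGraph (p + 2)).Adj i j := by
  rw [cycleGraph_adj_iff_val]
  unfold pathExtendCycle
  split_ifs <;>
    simp only [pathExtend_adj_inl_inl, pathExtend_adj_inl_inr, pathExtend_adj_inr_inl,
      pathExtend_adj_inr_inr, pathGraph_adj, huv, huv.symm, huv.ne, huv.ne.symm, G.irrefl,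
      true_and, false_and, or_false, false_or, true_iff, false_iff]
  all_goals omega

def pathExtendCycleEmbedding (huv : G.Adj u v) :
    cycleGraph (p + 2) ↪g G.pathExtend u v p where
  toFun := pathExtendCycle u v p
  inj' := pathExtendCycle_injective huv.ne
  map_rel_iff' := pathExtend_adj_pathExtendCycle huv

theorem pathExtendCycle_zero : pathExtendCycle u v p 0 = inl u := rfl

theorem pathExtendCycle_last : pathExtendCycle u v p (Fin.last (p + 1)) = inl v := by
  simp [pathExtendCycle]

theorem inr_mem_range_pathExtendCycle (i : Fin p) : inr i ∈ Set.range (pathExtendCycle u v p) :=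
  ⟨i.succ.castSucc, by have := i.isLt; simp [pathExtendCycle]; omega⟩

theorem eq_or_eq_of_inl_mem_range_pathExtendCycle {x : V}
    (hx : inl x ∈ Set.range (pathExtendCycle u v p)) : x = u ∨ x = v := by
  obtain ⟨j, hj⟩ := hx
  unfold pathExtendCycle at hj
  split_ifs at hj <;> simp_all

theorem mem_range_pathExtendCycle_of_adj_inr {i : Fin p} {w : V ⊕ Fin p}
    (h : (G.pathExtend u v p).Adj (inr i) w) : w ∈ Set.range (pathExtendCycle u v p) := by
  rcases w with x | j
  · rcases pathExtend_adj_inr_inl.1 h with ⟨rfl, -⟩ | ⟨rfl, -⟩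
    exacts [⟨0, pathExtendCycle_zero⟩, ⟨Fin.last _, pathExtendCycle_last⟩]
  · exact inr_mem_range_pathExtendCycle j

theorem isChordlessCycle_range_pathExtendCycle (huv : G.Adj u v) (hp : 1 ≤ p) :
    (G.pathExtend u v p).IsChordlessCycle (Set.range (pathExtendCycle u v p)) := by
  rw [← Set.image_univ]
  exact (pathExtendCycleEmbedding huv).isChordlessCycle_image_iff.2
    (isChordlessCycle_univ_cycleGraph (by omega))

theorem IsChordlessCycle.eq_range_pathExtendCycle (huv : G.Adj u v)
    {t : Set (V ⊕ Fin p)} (ht : (G.pathExtend u v p).IsChordlessCycle t) {i : Fin p}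
    (hi : inr i ∈ t) : t = Set.range (pathExtendCycle u v p) := by
  have hp : 1 ≤ p := by have := i.isLt; omega
  have hN := isChordlessCycle_range_pathExtendCycle huv hp
  have hnbr : ∀ j : Fin p, inr j ∈ t →
      ∀ w, (G.pathExtend u v p).Adj (inr j) w → w ∈ t := by
    intro j hj w hw
    obtain ⟨y, -, z, -, -, hadj⟩ := hN.exists_adj_iff (inr_mem_range_pathExtendCycle j)
    exact ht.mem_of_adj hj
      (fun w' hw' => (hadj w' (mem_range_pathExtendCycle_of_adj_inr hw')).1 hw') hw
  have hall : ∀ j : Fin p, inr j ∈ t := Set.eq_univ_iff_forall.1 <|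
    (pathGraph_preconnected p).eq_univ_of_adj_closed (K := {j | inr j ∈ t})
      (fun a b ha hab => hnbr a ha _ (pathExtend_adj_inr_inr.2 hab)) ⟨i, hi⟩
  refine (hN.eq_of_subset ht ?_).symm
  rintro _ ⟨j, rfl⟩
  unfold pathExtendCycle
  split_ifs
  · exact hnbr ⟨0, hp⟩ (hall _) _ (pathExtend_adj_inr_inl.2 (Or.inl ⟨rfl, rfl⟩))
  · exact hnbr ⟨p - 1, by omega⟩ (hall _) _ (pathExtend_adj_inr_inl.2 (Or.inr ⟨rfl, rfl⟩))
  · exact hall _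

theorem setOf_isChordlessCycle_pathExtend (huv : G.Adj u v) (hp : 1 ≤ p) :
    {t | (G.pathExtend u v p).IsChordlessCycle t} =
      insert (Set.range (pathExtendCycle u v p)) (Set.image inl '' {s | G.IsChordlessCycle s}) := by
  ext t
  simp only [Set.mem_ofPred_eq, Set.mem_insert_iff, Set.mem_image]
  constructor
  · intro ht
    by_cases h : ∃ i, inr i ∈ t
    · obtain ⟨i, hi⟩ := h
      exact Or.inl (ht.eq_range_pathExtendCycle huv hi)
    · have himg : inl '' (inl ⁻¹' t) = t := Set.image_preimage_eq_of_subset fun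
        | inl x, _ => ⟨x, rfl⟩
        | inr i, hi => absurd ⟨i, hi⟩ h
      refine Or.inr ⟨_, ?_, himg⟩
      rw [← (pathExtendInlEmbedding G u v p).isChordlessCycle_image_iff]
      exact himg.symm ▸ ht
  · rintro (rfl | ⟨s, hs, rfl⟩)
    · exact isChordlessCycle_range_pathExtendCycle huv hp
    · exact (pathExtendInlEmbedding G u v p).isChordlessCycle_image_iff.2 hs

theorem card_chordlessCycles_pathExtend [Finite V] (huv : G.Adj u v) (hp : 1 ≤ p) :
    Nat.card {t : Set (V ⊕ Fin p) // (G.pathExtend u v p).IsChordlessCycle t} =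
      Nat.card {s : Set V // G.IsChordlessCycle s} + 1 := by
  have hnew :
      Set.range (pathExtendCycle u v p) ∉ Set.image inl '' {s | G.IsChordlessCycle s} := by
    rintro ⟨s, -, hs⟩
    obtain ⟨x, -, hx⟩ := hs ▸ inr_mem_range_pathExtendCycle (u := u) (v := v) ⟨0, hp⟩
    exact inl_ne_inr hx
  have key := congrArg Set.ncard (setOf_isChordlessCycle_pathExtend huv hp)
  rw [Set.ncard_insert_of_notMem hnew (Set.toFinite _),
    Set.ncard_image_of_injective _ (Set.image_injective.2 inl_injective),
    ← Nat.card_coe_set_eq, ← Nat.card_coe_set_eq] at key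
  exact key

theorem pathExtend_eq_sup (huv : G.Adj u v) :
    G.pathExtend u v p = G.map inl ⊔ (cycleGraph (p + 2)).map (pathExtendCycle u v p) := by
  have hcycle : ∀ {a b}, a ∈ Set.range (pathExtendCycle u v p) →
      b ∈ Set.range (pathExtendCycle u v p) → (G.pathExtend u v p).Adj a b →
        ((cycleGraph (p + 2)).map (pathExtendCycle u v p)).Adj a b := by
    rintro _ _ ⟨i, rfl⟩ ⟨j, rfl⟩ h
    exact map_adj_apply' ((pathExtend_adj_pathExtendCycle huv).1 h) h.ne
  refine le_antisymm (fun a b h => ?_) (sup_le (pathExtendInlEmbedding G u v p).map_le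
    (pathExtendCycleEmbedding (p := p) huv).map_le)
  rcases a with x | i
  · rcases b with y | j
    · exact Or.inl (map_adj_apply' (pathExtend_adj_inl_inl.1 h) h.ne)
    · exact Or.inr (hcycle (mem_range_pathExtendCycle_of_adj_inr h.symm)
        (inr_mem_range_pathExtendCycle j) h)
  · exact Or.inr (hcycle (inr_mem_range_pathExtendCycle i)
      (mem_range_pathExtendCycle_of_adj_inr h) h)

theorem edgeSet_map_inl_inf_map_pathExtendCycle (huv : G.Adj u v) :
    (G.map inl ⊓ (cycleGraph (p + 2)).map (pathExtendCycle u v p)).edgeSet =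
      {s(inl u, inl v)} := by
  ext e
  induction e using Sym2.ind with | _ a b => ?_
  rw [mem_edgeSet, inf_adj, Set.mem_singleton_iff]
  constructor
  · rintro ⟨⟨-, x, y, hxy, rfl, rfl⟩, ⟨-, i, j, -, hi, hj⟩⟩
    rcases eq_or_eq_of_inl_mem_range_pathExtendCycle ⟨i, hi⟩ with rfl | rfl <;>
      rcases eq_or_eq_of_inl_mem_range_pathExtendCycle ⟨j, hj⟩ with rfl | rfl <;>
      first | exact absurd hxy (G.irrefl) | rfl | exact Sym2.eq_swap
  · have hne : (inl u : V ⊕ Fin p) ≠ inl v := by simpa using huv.ne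
    have h : (G.map (inl : V → V ⊕ Fin p)).Adj (inl u) (inl v) ∧
        ((cycleGraph (p + 2)).map (pathExtendCycle u v p)).Adj (inl u) (inl v) := by
      refine ⟨map_adj_apply' huv hne, ?_⟩
      rw [← pathExtendCycle_zero (v := v), ← pathExtendCycle_last (u := u)] at hne ⊢
      exact map_adj_apply' (by simp [cycleGraph_adj_iff_val]) hne
    rw [Sym2.eq_iff]
    rintro (⟨rfl, rfl⟩ | ⟨rfl, rfl⟩)
    exacts [h, ⟨h.1.symm, h.2.symm⟩]

theorem card_edgeSet_pathExtend [Finite V] (huv : G.Adj u v) (hp : 1 ≤ p) :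
    Nat.card (G.pathExtend u v p).edgeSet = Nat.card G.edgeSet + (p + 1) := by
  have := card_edgeSet_sup_add_card_edgeSet_inf (G.map inl)
    ((cycleGraph (p + 2)).map (pathExtendCycle u v p))
  rw [← pathExtend_eq_sup huv, edgeSet_map_inl_inf_map_pathExtendCycle huv,
    Nat.card_unique (α := ({s(inl u, inl v)} : Set _)), card_edgeSet_map inl_injective,
    card_edgeSet_map (pathExtendCycle_injective huv.ne), card_edgeSet_cycleGraph (by omega)]
    at this
  omega

end PathExtend

theorem IsPolygonal2Tree.finite {V : Type} {G : SimpleGraph V} (h : G.IsPolygonal2Tree) :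
    Finite V := by
  induction h with
  | cycle _ iso => exact .of_equiv _ iso.some.toEquiv.symm
  | extend _ _ iso _ ih => exact .of_equiv _ iso.some.toEquiv.symm

end SimpleGraph

/-- If `T` is a polygonal 2-tree with `n` vertices, `e` edges and `m` chordless
cycles, then `e = n + m - 1` (stated additively: `e + 1 = n + m`). -/
theorem polygonal2Tree_card_edges {V : Type} (G : SimpleGraph V)
    (h : G.IsPolygonal2Tree) :
    Nat.card G.edgeSet + 1 =
      Nat.card V + Nat.card {s : Set V // G.IsChordlessCycle s} := by
  induction h with
  | cycle hk iso =>
    obtain ⟨e⟩ := iso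
    rw [Nat.card_congr e.mapEdgeSet, Nat.card_congr e.toEquiv, e.card_chordlessCycles_eq,
      card_edgeSet_cycleGraph hk, card_chordlessCycles_cycleGraph hk, Nat.card_fin]
  | extend huv hp iso hG =>
    obtain ⟨e⟩ := iso
    have := hG.finite
    rw [Nat.card_congr e.mapEdgeSet, Nat.card_congr e.toEquiv, e.card_chordlessCycles_eq,
      card_edgeSet_pathExtend huv hp, card_chordlessCycles_pathExtend huv hp, Nat.card_sum,
      Nat.card_fin]
    omega
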